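/- Let P_n be the path on n ≥ 2 vertices. Then mag^-(P_n) = 2 and mag^+(P_n) = n. -/

import Mathlib

namespace MAG

variable {V : Type*}

/-- Directed walk from `x` to `y` whose list of visited vertices is `l`. -/
inductive DWalk (A : V → V → Prop) : V → V → List V → Prop
  | nil (v : V) : DWalk A v v [v]
  | cons {u v w : V} {l : List V} (h : A u v) (p : DWalk A v w l) :
      DWalk A u w (u :: l)

/-- The arc `(a, b)` lies on the walk with vertex list `l`. -/
def ArcOn (a b : V) (l : List V) : Prop :=
  ∃ l₁ l₂ : List V, l = l₁ ++ a :: b :: l₂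

/-- `l` is (the vertex list of) a shortest directed walk from `x` to `y`. -/
def IsShortest (A : V → V → Prop) (x y : V) (l : List V) : Prop :=
  DWalk A x y l ∧ ∀ l' : List V, DWalk A x y l' → l.length ≤ l'.length

/-- `x` and `y` monitor the arc `(a, b)`: the arc lies on every shortest
directed path from `x` to `y` (and such a path exists), or symmetrically
from `y` to `x`. -/
def Monitors (A : V → V → Prop) (x y a b : V) : Prop :=
  ((∃ l, IsShortest A x y l) ∧ ∀ l, IsShortest A x y l → ArcOn a b l) ∨
  ((∃ l, IsShortest A y x l) ∧ ∀ l, IsShortest A y x l → ArcOn a b l)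

/-- A monitoring arc-geodetic set of the digraph `A`. -/
def IsMAGSet (A : V → V → Prop) (M : Set V) : Prop :=
  ∀ a b : V, A a b → ∃ x ∈ M, ∃ y ∈ M, x ≠ y ∧ Monitors A x y a b

/-- The monitoring arc-geodetic number of the digraph `A`. -/
noncomputable def mag (A : V → V → Prop) [Fintype V] : ℕ :=
  sInf {n | ∃ M : Finset V, IsMAGSet A (M : Set V) ∧ M.card = n}

/-- `A` is an orientation of the undirected simple graph `G`. -/
structure IsOrientation (G : SimpleGraph V) (A : V → V → Prop) : Prop where
  adj_iff : ∀ u v : V, G.Adj u v ↔ (A u v ∨ A v u)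
  asymm : ∀ u v : V, A u v → ¬ A v u

/-- The lower monitoring arc-geodetic number of `G`. -/
noncomputable def magMinus (G : SimpleGraph V) [Fintype V] : ℕ :=
  sInf {n | ∃ A : V → V → Prop, IsOrientation G A ∧ mag A = n}

/-- The upper monitoring arc-geodetic number of `G`. -/
noncomputable def magPlus (G : SimpleGraph V) [Fintype V] : ℕ :=
  sSup {n | ∃ A : V → V → Prop, IsOrientation G A ∧ mag A = n}

/-- A source: a vertex with no in-neighbours. -/
def IsSource (A : V → V → Prop) (v : V) : Prop := ∀ w, ¬ A w v

/-- A sink: a vertex with no out-neighbours. -/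
def IsSink (A : V → V → Prop) (v : V) : Prop := ∀ w, ¬ A v w

/-- An oriented graph: no loops and no pair of opposite arcs. -/
def IsOrientedGraph (A : V → V → Prop) : Prop :=
  (∀ v, ¬ A v v) ∧ ∀ u v : V, A u v → ¬ A v u

/-- The underlying undirected graph of `A` is connected. -/
def IsConnectedDigraph (A : V → V → Prop) : Prop :=
  ∀ x y : V, Relation.ReflTransGen (fun a b => A a b ∨ A b a) x y

/-! In every orientation of `P_n` some arc must be monitored by two distinct vertices, while the
whole vertex set monitors each arc through its own endpoints, so `2 ≤ mag A ≤ n`. The orientation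
`v₁ → v₂ → ⋯ → vₙ` attains `2`, since every arc lies on every directed path from `v₁` to `vₙ`. The
alternating orientation, in which every vertex is a source or a sink, attains `n`: its directed
walks have at most one arc, so an arc can only be monitored by its own two endpoints. -/

section Digraph

variable {A : V → V → Prop}

lemma DWalk.exists_eq_cons {x y : V} {l : List V} (p : DWalk A x y l) : ∃ t, l = x :: t := by
  cases p <;> exact ⟨_, rfl⟩

lemma DWalk.two_le_length {x y : V} {l : List V} (p : DWalk A x y l) (hxy : x ≠ y) :
    2 ≤ l.length := by
  cases p with
  | nil => exact absurd rfl hxy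
  | cons _ q => cases q <;> simp

lemma DWalk.eq_pair_of_length_eq_two {x y : V} {l : List V} (p : DWalk A x y l)
    (h : l.length = 2) : l = [x, y] := by
  cases p with
  | nil => simp at h
  | cons _ q =>
    cases q with
    | nil => rfl
    | cons _ r => cases r <;> simp at h

lemma DWalk.eq_or_eq_of_isSource_or_isSink (hA : ∀ v, IsSource A v ∨ IsSink A v) {x y : V}
    {l : List V} (p : DWalk A x y l) : ∀ v ∈ l, v = x ∨ v = y := by
  cases p with
  | nil => simp
  | cons h q =>
    cases q with
    | nil => simp
    | cons h' _ => exact ((hA _).elim (fun hs => hs _ h) (fun hs => hs _ h')).elim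

lemma ArcOn.mem {a b : V} {l : List V} (h : ArcOn a b l) : a ∈ l ∧ b ∈ l := by
  obtain ⟨l₁, l₂, rfl⟩ := h
  simp

lemma exists_isShortest {x y : V} {l : List V} (p : DWalk A x y l) :
    ∃ l', IsShortest A x y l' := by
  classical
  have h : ∃ k, ∃ l, DWalk A x y l ∧ l.length = k := ⟨_, l, p, rfl⟩
  obtain ⟨l', hl', hlen⟩ := Nat.find_spec h
  exact ⟨l', hl', fun l'' hl'' => hlen ▸ Nat.find_min' h ⟨l'', hl'', rfl⟩⟩

lemma monitors_of_forall_arcOn {x y a b : V} (hxy : ∃ l, DWalk A x y l)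
    (h : ∀ l, DWalk A x y l → ArcOn a b l) : Monitors A x y a b :=
  Or.inl ⟨exists_isShortest hxy.choose_spec, fun l hl => h l hl.1⟩

lemma monitors_of_arc {a b : V} (hab : A a b) (hne : a ≠ b) : Monitors A a b a b := by
  have walk : DWalk A a b [a, b] := .cons hab (.nil b)
  refine Or.inl ⟨⟨[a, b], walk, fun l hl => hl.two_le_length hne⟩, fun l hl => ?_⟩
  have hlen : l.length = 2 := le_antisymm (hl.2 _ walk) (hl.1.two_le_length hne)
  rw [hl.1.eq_pair_of_length_eq_two hlen]
  exact ⟨[], [], rfl⟩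

lemma isMAGSet_univ [Fintype V] (hA : ∀ v, ¬ A v v) :
    IsMAGSet A ((Finset.univ : Finset V) : Set V) := fun a b hab =>
  have hne : a ≠ b := fun h => hA a (h ▸ hab)
  ⟨a, by simp, b, by simp, hne, monitors_of_arc hab hne⟩

lemma IsMAGSet.mem_of_arc (hA : ∀ v, IsSource A v ∨ IsSink A v) {M : Set V}
    (hM : IsMAGSet A M) {a b : V} (hab : A a b) : a ∈ M ∧ b ∈ M := by
  obtain ⟨x, hx, y, hy, -, hmon⟩ := hM a b hab
  have key : ∀ {s t : V} {l : List V}, s ∈ M → t ∈ M → DWalk A s t l → ArcOn a b l →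
      a ∈ M ∧ b ∈ M := by
    intro s t l hs ht hl hon
    have hmem := hl.eq_or_eq_of_isSource_or_isSink hA
    constructor
    · rcases hmem a hon.mem.1 with rfl | rfl <;> assumption
    · rcases hmem b hon.mem.2 with rfl | rfl <;> assumption
  rcases hmon with ⟨⟨l, hl⟩, hall⟩ | ⟨⟨l, hl⟩, hall⟩
  · exact key hx hy hl.1 (hall l hl)
  · exact key hy hx hl.1 (hall l hl)

variable [Fintype V]

lemma mag_le {M : Finset V} (hM : IsMAGSet A M) : mag A ≤ M.card :=
  Nat.sInf_le ⟨M, hM, rfl⟩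

lemma le_mag (hA : ∀ v, ¬ A v v) {k : ℕ} (h : ∀ M : Finset V, IsMAGSet A M → k ≤ M.card) :
    k ≤ mag A :=
  le_csInf ⟨_, _, isMAGSet_univ hA, rfl⟩ (by rintro _ ⟨M, hM, rfl⟩; exact h M hM)

lemma mag_le_card (hA : ∀ v, ¬ A v v) : mag A ≤ Fintype.card V :=
  (mag_le (isMAGSet_univ hA)).trans_eq Finset.card_univ

lemma two_le_mag (hA : ∀ v, ¬ A v v) {a b : V} (hab : A a b) : 2 ≤ mag A :=
  le_mag hA fun M hM => by
    obtain ⟨x, hx, y, hy, hxy, -⟩ := hM a b hab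
    exact Finset.one_lt_card.2 ⟨x, hx, y, hy, hxy⟩

lemma card_le_mag (hA : ∀ v, IsSource A v ∨ IsSink A v) (hcov : ∀ v, ∃ w, A v w ∨ A w v) :
    Fintype.card V ≤ mag A := by
  have hirrefl : ∀ v, ¬ A v v := fun v h => (hA v).elim (fun hs => hs v h) (fun hs => hs v h)
  refine le_mag hirrefl fun M hM => ?_
  have hmem : ∀ v, v ∈ M := fun v => by
    obtain ⟨w, h | h⟩ := hcov v
    · exact (hM.mem_of_arc hA h).1
    · exact (hM.mem_of_arc hA h).2
  rw [Finset.eq_univ_of_forall hmem, Finset.card_univ]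

end Digraph

section Orientation

variable {G : SimpleGraph V} {A : V → V → Prop}

lemma IsOrientation.irrefl (hA : IsOrientation G A) (v : V) : ¬ A v v :=
  fun h => G.irrefl ((hA.adj_iff v v).2 (Or.inl h))

variable [Fintype V]

lemma magMinus_le (hA : IsOrientation G A) : magMinus G ≤ mag A :=
  Nat.sInf_le ⟨A, hA, rfl⟩

lemma le_magMinus (hA : IsOrientation G A) {k : ℕ}
    (h : ∀ B, IsOrientation G B → k ≤ mag B) : k ≤ magMinus G :=
  le_csInf ⟨_, A, hA, rfl⟩ (by rintro _ ⟨B, hB, rfl⟩; exact h B hB)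

lemma magPlus_le (hA : IsOrientation G A) {k : ℕ}
    (h : ∀ B, IsOrientation G B → mag B ≤ k) : magPlus G ≤ k :=
  csSup_le ⟨_, A, hA, rfl⟩ (by rintro _ ⟨B, hB, rfl⟩; exact h B hB)

lemma le_magPlus (hA : IsOrientation G A) : mag A ≤ magPlus G :=
  le_csSup ⟨Fintype.card V, by rintro _ ⟨B, hB, rfl⟩; exact mag_le_card hB.irrefl⟩ ⟨A, hA, rfl⟩

end Orientation

section Path

variable {n : ℕ}

lemma pathGraph_exists_adj (hn : 2 ≤ n) (v : Fin n) : ∃ w, (SimpleGraph.pathGraph n).Adj v w := by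
  simp only [SimpleGraph.pathGraph_adj]
  by_cases hv : v.val + 1 < n
  · exact ⟨⟨v.val + 1, hv⟩, Or.inl rfl⟩
  · exact ⟨⟨v.val - 1, by omega⟩, Or.inr (by simp only; omega)⟩

variable (n) in
def forwardOrientation : Fin n → Fin n → Prop := fun u v => u.val + 1 = v.val

variable (n) in
def alternatingOrientation : Fin n → Fin n → Prop :=
  fun u v => (u.val + 1 = v.val ∨ v.val + 1 = u.val) ∧ v.val % 2 = 1

variable (n) in
lemma isOrientation_forwardOrientation :
    IsOrientation (SimpleGraph.pathGraph n) (forwardOrientation n) where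
  adj_iff u v := by rw [SimpleGraph.pathGraph_adj]; rfl
  asymm u v h h' := by simp only [forwardOrientation] at h h'; omega

variable (n) in
lemma isOrientation_alternatingOrientation :
    IsOrientation (SimpleGraph.pathGraph n) (alternatingOrientation n) where
  adj_iff u v := by rw [SimpleGraph.pathGraph_adj]; simp only [alternatingOrientation]; omega
  asymm u v h h' := by simp only [alternatingOrientation] at h h'; omega

lemma exists_dwalk_forwardOrientation {x y : Fin n} (hxy : x ≤ y) :
    ∃ l, DWalk (forwardOrientation n) x y l := by
  obtain ⟨k, hk⟩ := Nat.exists_eq_add_of_le (Fin.le_def.1 hxy)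
  induction k generalizing x with
  | zero =>
    obtain rfl : x = y := Fin.ext (by omega)
    exact ⟨_, .nil x⟩
  | succ k ih =>
    obtain ⟨l, hl⟩ := ih (x := ⟨x.val + 1, by omega⟩) (Fin.le_def.2 (by simp only; omega))
      (by simp only; omega)
    exact ⟨x :: l, .cons (show forwardOrientation n x ⟨x.val + 1, _⟩ from rfl) hl⟩

lemma DWalk.arcOn_of_forwardOrientation {x y a b : Fin n} {l : List (Fin n)}
    (p : DWalk (forwardOrientation n) x y l) (hab : forwardOrientation n a b)
    (hxa : x ≤ a) (hby : b ≤ y) : ArcOn a b l := by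
  simp only [forwardOrientation, Fin.le_def] at hab hxa hby
  induction p with
  | nil => omega
  | @cons u v w t huv q ih =>
    simp only [forwardOrientation] at huv
    by_cases hau : a = u
    · obtain rfl := hau
      obtain rfl : b = v := Fin.ext (by omega)
      obtain ⟨t', rfl⟩ := q.exists_eq_cons
      exact ⟨[], t', rfl⟩
    · obtain ⟨l₁, l₂, rfl⟩ := ih (by omega) hby
      exact ⟨u :: l₁, l₂, rfl⟩

lemma mag_forwardOrientation_le_two (hn : 0 < n) : mag (forwardOrientation n) ≤ 2 := by
  let first : Fin n := ⟨0, hn⟩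
  let last : Fin n := ⟨n - 1, by omega⟩
  have hfl : first ≤ last := Fin.le_def.2 (Nat.zero_le _)
  refine (mag_le (M := {first, last}) fun a b hab => ?_).trans Finset.card_le_two
  simp only [forwardOrientation] at hab
  have hne : first ≠ last := by
    simp only [first, last, ne_eq, Fin.ext_iff]
    omega
  have hmon : Monitors (forwardOrientation n) first last a b :=
    monitors_of_forall_arcOn (exists_dwalk_forwardOrientation hfl) fun l hl =>
      hl.arcOn_of_forwardOrientation hab (Fin.le_def.2 (Nat.zero_le _))
        (Fin.le_def.2 (by simp only [last]; omega))
  exact ⟨first, by simp, last, by simp, hne, hmon⟩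

lemma isSource_or_isSink_alternatingOrientation (v : Fin n) :
    IsSource (alternatingOrientation n) v ∨ IsSink (alternatingOrientation n) v := by
  simp only [IsSource, IsSink, alternatingOrientation]
  rcases Nat.mod_two_eq_zero_or_one v.val with h | h
  · left; omega
  · right; omega

lemma mag_alternatingOrientation (hn : 2 ≤ n) : mag (alternatingOrientation n) = n := by
  have halt := isOrientation_alternatingOrientation n
  have hcov : ∀ v, ∃ w, alternatingOrientation n v w ∨ alternatingOrientation n w v := fun v =>
    (pathGraph_exists_adj hn v).imp fun w hw => (halt.adj_iff v w).1 hw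
  refine le_antisymm ((mag_le_card halt.irrefl).trans_eq (Fintype.card_fin n)) ?_
  exact (Fintype.card_fin n).symm.le.trans
    (card_le_mag isSource_or_isSink_alternatingOrientation hcov)

end Path

/-- for the path graph on `n ≥ 2` vertices,
`mag⁻(P_n) = 2` and `mag⁺(P_n) = n`. -/
theorem pathGraph_magMinus_magPlus (n : ℕ) (hn : 2 ≤ n) :
    magMinus (SimpleGraph.pathGraph n) = 2 ∧
    magPlus (SimpleGraph.pathGraph n) = n := by
  have hfwd := isOrientation_forwardOrientation n
  have halt := isOrientation_alternatingOrientation n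
  refine ⟨le_antisymm ?_ ?_, le_antisymm ?_ ?_⟩
  · exact (magMinus_le hfwd).trans (mag_forwardOrientation_le_two (by omega))
  · refine le_magMinus hfwd fun A hA => ?_
    obtain ⟨w, hw⟩ := pathGraph_exists_adj hn ⟨0, by omega⟩
    rcases (hA.adj_iff _ _).1 hw with h | h <;> exact two_le_mag hA.irrefl h
  · exact magPlus_le halt fun A hA => (mag_le_card hA.irrefl).trans_eq (Fintype.card_fin n)
  · exact (mag_alternatingOrientation hn).symm.le.trans (le_magPlus halt)

end MAG
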